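/- arXiv:1702.02896 — 2 statements merged into one kernel-verified Lean document; each statement's English description precedes it below -/
import Mathlib

section
/- If a class Π of binary-valued functions satisfies the entropy bound log N_H(ε, Π) ≤ κ log(1/ε) for all 0 < ε < 1/2, where N_H is the ε-Hamming covering number, then the VC dimension d of Π satisfies d · log 2 ≤ κ · log d (for d ≥ 2). -/
open Classical

/-- Normalized Hamming distance between two binary functions on a finite list of points. -/
noncomputable def hammingDistOn {X : Type*} {m : ℕ} (pts : Fin m → X) (f g : X → Bool) : ℝ :=
  ((Finset.univ.filter fun j : Fin m => f (pts j) ≠ g (pts j)).card : ℝ) / m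

/-- `HCoverBound Π ε N` : for every finite collection of points, there is a set of at most `N`
binary functions (not necessarily in `Π`) that `ε`-covers `Π` in normalized Hamming distance. -/
def HCoverBound {X : Type*} (Pi : Set (X → Bool)) (ε : ℝ) (N : ℕ) : Prop :=
  ∀ (m : ℕ) (pts : Fin m → X), 0 < m →
    ∃ C : Finset (X → Bool), C.card ≤ N ∧
      ∀ π ∈ Pi, ∃ c ∈ C, hammingDistOn pts π c ≤ ε

/-- If `log N_H(ε, Π) ≤ κ log(1/ε)` for all `0 < ε < 1/2`, then any VC dimension `d ≥ 2`
witnessed by a shattered set of `d` points satisfies `d log 2 ≤ κ log d`. -/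
theorem vc_dim_bound_from_hamming_entropy {X : Type*} (Pi : Set (X → Bool)) (κ : ℝ)
    (hcov : ∀ ε : ℝ, 0 < ε → ε < 1 / 2 →
      ∃ N : ℕ, 0 < N ∧ HCoverBound Pi ε N ∧ Real.log N ≤ κ * Real.log (1 / ε))
    (d : ℕ) (hd : 2 ≤ d) (pts : Fin d → X) (hinj : Function.Injective pts)
    (hshatter : ∀ σ : Fin d → Bool, ∃ π ∈ Pi, ∀ j, π (pts j) = σ j) :
    (d : ℝ) * Real.log 2 ≤ κ * Real.log d := by
  have hd0 : (0:ℝ) < d := by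
    have : 0 < d := by omega
    exact_mod_cast this
  have hd1 : (1:ℝ) < d := by exact_mod_cast (by omega : 1 < d)
  have hlogd : 0 < Real.log d := Real.log_pos hd1
  have hlog2 : 0 < Real.log 2 := Real.log_pos (by norm_num)
  have key : ∀ t : ℝ, Real.log d < t → (d:ℝ) * Real.log 2 ≤ κ * t := by
    intro t ht
    set ε := Real.exp (-t) with hε
    have hε0 : 0 < ε := Real.exp_pos _
    have h1d : (1:ℝ)/d = Real.exp (-(Real.log d)) := by
      rw [Real.exp_neg, Real.exp_log hd0, one_div]
    have hεd : ε < 1 / d := by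
      rw [h1d, hε]
      exact Real.exp_lt_exp.mpr (by linarith)
    have hεhalf : ε < 1 / 2 := lt_of_lt_of_le hεd
      (one_div_le_one_div_of_le (by norm_num) (by exact_mod_cast hd))
    obtain ⟨N, hN0, hHB, hlogN⟩ := hcov ε hε0 hεhalf
    obtain ⟨C, hCcard, hcover⟩ := hHB d pts (by omega)
    choose π hπPi hπ using hshatter
    choose c hcC hcd using fun σ => hcover (π σ) (hπPi σ)
    have hagree : ∀ σ (j : Fin d), π σ (pts j) = c σ (pts j) := by
      intro σ j
      by_contra hne
      have hcard : 1 ≤ (Finset.univ.filter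
          fun j : Fin d => π σ (pts j) ≠ c σ (pts j)).card :=
        Finset.card_pos.mpr ⟨j, by simp [hne]⟩
      have hdist := hcd σ
      unfold hammingDistOn at hdist
      have hcardR : (1:ℝ) ≤ ((Finset.univ.filter
          fun j : Fin d => π σ (pts j) ≠ c σ (pts j)).card : ℝ) := by exact_mod_cast hcard
      have h1 : (1:ℝ)/d ≤ ((Finset.univ.filter
          fun j : Fin d => π σ (pts j) ≠ c σ (pts j)).card : ℝ) / d :=
        by gcongr
      linarith
    have hinjc : Function.Injective c := by
      intro σ τ hcc
      funext j
      calc σ j = π σ (pts j) := (hπ σ j).symm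
        _ = c σ (pts j) := hagree σ j
        _ = c τ (pts j) := by rw [hcc]
        _ = π τ (pts j) := (hagree τ j).symm
        _ = τ j := hπ τ j
    have h2d : 2 ^ d ≤ N := by
      have h1 : (Finset.univ : Finset (Fin d → Bool)).card ≤ C.card :=
        Finset.card_le_card_of_injOn c (fun σ _ => hcC σ) hinjc.injOn
      have h2 : (Finset.univ : Finset (Fin d → Bool)).card = 2 ^ d := by
        simp [Finset.card_univ]
      omega
    have hlog2d : (d:ℝ) * Real.log 2 ≤ Real.log N := by
      have hle : ((2:ℝ) ^ d) ≤ (N:ℝ) := by exact_mod_cast h2d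
      have := Real.log_le_log (by positivity) hle
      simpa [Real.log_pow] using this
    have hloge : Real.log (1/ε) = t := by
      rw [one_div, hε, ← Real.exp_neg, neg_neg, Real.log_exp]
    rw [hloge] at hlogN
    linarith
  have hκ : 0 < κ := by
    have h := key (Real.log d + 1) (by linarith)
    nlinarith
  have hdiv : (d:ℝ) * Real.log 2 / κ ≤ Real.log d := by
    apply le_of_forall_gt_imp_ge_of_dense
    intro t ht
    rw [div_le_iff₀ hκ]
    linarith [key t ht]
  calc (d:ℝ) * Real.log 2 = ((d:ℝ) * Real.log 2 / κ) * κ := by field_simp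
    _ ≤ Real.log d * κ := mul_le_mul_of_nonneg_right hdiv hκ.le
    _ = κ * Real.log d := mul_comm _ _
end

section
/- Let W be a real-valued random variable with conditional density f(w | X = x) given X = x that is continuously differentiable in w, vanishing at ±∞, and let m(x, w) be continuously differentiable and bounded with bounded derivative in w. Define g(x, w) = −∂/∂w [log f(w | x)]. Then E[ ∂m/∂w (X, W) | X = x ] = E[ g(X, W) m(X, W) | X = x ]. -/
open MeasureTheory Filter

/-! Since `(log f)' f = f'`, the right-hand side is `-∫ m f'`, and integrating by parts turns it
into `∫ m' f`: the boundary term `m f` vanishes at `±∞` because `m` is bounded and `f → 0`. -/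

theorem integral_deriv_mul_eq_neg_integral_mul_deriv_of_bounded {m f : ℝ → ℝ}
    (hm : Differentiable ℝ m) (hf : Differentiable ℝ f) {Cm Cm' : ℝ}
    (hmb : ∀ x, |m x| ≤ Cm) (hm'b : ∀ x, |deriv m x| ≤ Cm')
    (hfint : Integrable f) (hf'int : Integrable (deriv f))
    (hftop : Tendsto f atTop (nhds 0)) (hfbot : Tendsto f atBot (nhds 0)) :
    ∫ x, deriv m x * f x = -∫ x, m x * deriv f x := by
  have hm_bdd : ∀ l : Filter ℝ, IsBoundedUnder (· ≤ ·) l (norm ∘ m) := fun l =>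
    isBoundedUnder_of ⟨Cm, fun x => hmb x⟩
  have hmf'int : Integrable (m * deriv f) :=
    hf'int.bdd_mul hm.continuous.aestronglyMeasurable (.of_forall hmb)
  have hm'fint : Integrable (deriv m * f) :=
    hfint.bdd_mul (measurable_deriv m).aestronglyMeasurable (.of_forall hm'b)
  have hparts := integral_mul_deriv_eq_deriv_mul (fun x _ => (hm x).hasDerivAt)
    (fun x _ => (hf x).hasDerivAt) hmf'int hm'fint
    (isBoundedUnder_le_mul_tendsto_zero (hm_bdd _) hfbot)
    (isBoundedUnder_le_mul_tendsto_zero (hm_bdd _) hftop)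
  rw [hparts]
  ring

theorem average_derivative_weighting_identity_general (f m : ℝ → ℝ)
    (hfpos : ∀ w, 0 < f w)
    (hfint : Integrable f)
    (hfC1 : ContDiff ℝ 1 f) (hf'int : Integrable (deriv f))
    (hftop : Tendsto f atTop (nhds 0)) (hfbot : Tendsto f atBot (nhds 0))
    (hmC1 : ContDiff ℝ 1 m)
    (C : ℝ) (hmb : ∀ w, |m w| ≤ C) (hm'b : ∀ w, |deriv m w| ≤ C) :
    ∫ w, deriv m w * f w =
      ∫ w, (-(deriv (fun v => Real.log (f v)) w)) * m w * f w := by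
  have hf := hfC1.differentiable one_ne_zero
  rw [integral_deriv_mul_eq_neg_integral_mul_deriv_of_bounded (hmC1.differentiable one_ne_zero)
    hf hmb hm'b hfint hf'int hftop hfbot, ← integral_neg]
  congr 1 with w
  rw [deriv.log (hf w) (hfpos w).ne']
  field_simp [(hfpos w).ne']

/-- Powell–Stock–Stoker integration by parts: if `f` is a positive `C¹` density on `ℝ`
vanishing at `±∞` with integrable derivative, `m` is `C¹`, bounded with bounded derivative,
and `g(w) = -d/dw log f(w)`, then `∫ m'(w) f(w) dw = ∫ g(w) m(w) f(w) dw`. -/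
theorem average_derivative_weighting_identity (f m : ℝ → ℝ)
    (hfpos : ∀ w, 0 < f w)
    (hfint : Integrable f) (hfdens : ∫ w, f w = 1)
    (hfC1 : ContDiff ℝ 1 f) (hf'int : Integrable (deriv f))
    (hftop : Tendsto f atTop (nhds 0)) (hfbot : Tendsto f atBot (nhds 0))
    (hmC1 : ContDiff ℝ 1 m)
    (C : ℝ) (hmb : ∀ w, |m w| ≤ C) (hm'b : ∀ w, |deriv m w| ≤ C) :
    ∫ w, deriv m w * f w =
      ∫ w, (-(deriv (fun v => Real.log (f v)) w)) * m w * f w :=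
  average_derivative_weighting_identity_general f m hfpos hfint hfC1 hf'int hftop hfbot hmC1 C hmb
    hm'b
end
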